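/- The monoid Ψ_0 (the smallest W-stable submonoid of ℤ^n containing all partitions, where W is the semisymmetric group) consists exactly of all λ ∈ ℕ^n with Σ_{i odd} λ_i ≥ Σ_{i even} λ_i. -/

import Mathlib

/-! Let `C` be the set of nonnegative vectors whose sum over the (0-based) odd positions is at most
their sum over the even positions. `C` is a `W`-stable submonoid, and it contains every partition
because `λ (2k+1) ≤ λ (2k)`; hence `Ψ₀ ⊆ C`. Conversely `Ψ₀` contains the unit vectors `eᵢ`,
`i` even, and the sums `eᵢ + eⱼ`, `i` even and `j` odd, as `W`-translates of the partitions `e₀`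
and `e₀ + e₁`. From a nonzero `λ ∈ C` one can remove such a generator without leaving `C`: a pair
`eᵢ + eⱼ` while some odd coordinate is positive (the even sum is then positive too), otherwise a
single even `eᵢ`. Induction on `∑ λ` gives `C ⊆ Ψ₀`. -/

open Finset

/-- A permutation of `{1,…,n}` is parity preserving (`π(i) ≡ i mod 2`). -/
def ParityPerm {n : ℕ} (π : Equiv.Perm (Fin n)) : Prop :=
  ∀ i : Fin n, ((π i : ℕ)) % 2 = (i : ℕ) % 2

/-- Partitions inside `ℤ^n`: weakly decreasing tuples of nonnegative integers. -/
def PartSet (n : ℕ) : Set (Fin n → ℤ) :=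
  {lam | (∀ i j : Fin n, i ≤ j → lam j ≤ lam i) ∧ ∀ i, 0 ≤ lam i}

/-- `Ψ_0`: the smallest `W`-stable additive submonoid of `ℤ^n` containing all partitions. -/
noncomputable def Psi0 (n : ℕ) : AddSubmonoid (Fin n → ℤ) :=
  sInf {S | PartSet n ⊆ S ∧
    ∀ π : Equiv.Perm (Fin n), ParityPerm π → ∀ x ∈ S, (fun i => x (π i)) ∈ S}

namespace Finset

variable {ι κ M : Type*} [AddCommMonoid M] [PartialOrder M] [IsOrderedAddMonoid M]

lemma sum_le_sum_of_injOn {s : Finset ι} {t : Finset κ} {f : ι → M} {g : κ → M} (e : ι → κ)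
    (he : Set.InjOn e s) (hmaps : Set.MapsTo e s t) (hfg : ∀ i ∈ s, f i ≤ g (e i))
    (hg : ∀ k ∈ t, 0 ≤ g k) : ∑ i ∈ s, f i ≤ ∑ k ∈ t, g k := by
  classical
  calc ∑ i ∈ s, f i ≤ ∑ i ∈ s, g (e i) := sum_le_sum hfg
    _ = ∑ k ∈ s.image e, g k := (sum_image he).symm
    _ ≤ ∑ k ∈ t, g k :=
      sum_le_sum_of_subset_of_nonneg (image_subset_iff.2 hmaps) fun k hk _ => hg k hk

end Finset

variable {n : ℕ}

lemma ParityPerm.swap {a b : Fin n} (h : (a : ℕ) % 2 = (b : ℕ) % 2) :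
    ParityPerm (Equiv.swap a b) := by
  intro k
  rw [Equiv.swap_apply_def]
  split_ifs with hka hkb
  · rw [hka, h]
  · rw [hkb, h]
  · rfl

lemma ParityPerm.odd_iff {π : Equiv.Perm (Fin n)} (hπ : ParityPerm π) (i : Fin n) :
    Odd (π i : ℕ) ↔ Odd (i : ℕ) := by
  rw [Nat.odd_iff, Nat.odd_iff, hπ i]

lemma ParityPerm.even_iff {π : Equiv.Perm (Fin n)} (hπ : ParityPerm π) (i : Fin n) :
    Even (π i : ℕ) ↔ Even (i : ℕ) := by
  rw [Nat.even_iff, Nat.even_iff, hπ i]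

lemma PartSet_subset_Psi0 : PartSet n ⊆ Psi0 n :=
  fun _ hx => AddSubmonoid.mem_sInf.2 fun _ hS => hS.1 hx

lemma comp_mem_Psi0 {π : Equiv.Perm (Fin n)} (hπ : ParityPerm π) {x : Fin n → ℤ}
    (hx : x ∈ Psi0 n) : x ∘ π ∈ Psi0 n :=
  AddSubmonoid.mem_sInf.2 fun S hS => hS.2 π hπ x (AddSubmonoid.mem_sInf.1 hx S hS)

lemma Psi0_le {S : AddSubmonoid (Fin n → ℤ)} (hpart : PartSet n ⊆ S)
    (hperm : ∀ π : Equiv.Perm (Fin n), ParityPerm π → ∀ x ∈ S, x ∘ π ∈ S) : Psi0 n ≤ S :=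
  sInf_le ⟨hpart, hperm⟩

lemma indicator_lt_mem_PartSet (m : ℕ) :
    (fun k : Fin n => if (k : ℕ) < m then (1 : ℤ) else 0) ∈ PartSet n := by
  refine ⟨fun i j hij => ?_, fun k => by positivity⟩
  have : (i : ℕ) ≤ j := hij
  dsimp only
  split_ifs <;> omega

lemma Pi.single_comp_swap {ι M : Type*} [DecidableEq ι] [Zero M] (a b c : ι) (x : M) :
    Pi.single c x ∘ Equiv.swap a b = Pi.single (Equiv.swap a b c) x := by
  rw [Pi.single_comp_equiv, Equiv.symm_swap]

lemma single_mem_Psi0 {i : Fin n} (hi : Even (i : ℕ)) : Pi.single i 1 ∈ Psi0 n := by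
  set a : Fin n := ⟨0, i.pos⟩
  have ha : Pi.single a 1 ∈ Psi0 n := by
    have : Pi.single a 1 = fun k : Fin n => if (k : ℕ) < 1 then (1 : ℤ) else 0 := by
      ext k
      simp [a, Pi.single_apply, Fin.ext_iff]
    exact this ▸ PartSet_subset_Psi0 (indicator_lt_mem_PartSet 1)
  have hai : ParityPerm (Equiv.swap a i) := .swap (by simpa [a, Nat.even_iff, eq_comm] using hi)
  simpa [Pi.single_comp_swap] using comp_mem_Psi0 hai ha

lemma single_add_single_mem_Psi0 {i j : Fin n} (hi : Even (i : ℕ)) (hj : Odd (j : ℕ)) :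
    Pi.single i 1 + Pi.single j 1 ∈ Psi0 n := by
  have h1 : 1 < n := by have := j.isLt; have := hj.pos; omega
  set a : Fin n := ⟨0, by omega⟩
  set b : Fin n := ⟨1, h1⟩
  have hab : Pi.single a 1 + Pi.single b 1 ∈ Psi0 n := by
    have : Pi.single a 1 + Pi.single b 1 =
        fun k : Fin n => if (k : ℕ) < 2 then (1 : ℤ) else 0 := by
      ext k
      simp only [a, b, Pi.add_apply, Pi.single_apply, Fin.ext_iff]
      split_ifs <;> omega
    exact this ▸ PartSet_subset_Psi0 (indicator_lt_mem_PartSet 2)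
  have hai : ParityPerm (Equiv.swap a i) := .swap (by simpa [a, Nat.even_iff, eq_comm] using hi)
  have hbj : ParityPerm (Equiv.swap b j) := .swap (by simpa [b, Nat.odd_iff, eq_comm] using hj)
  have hbi : b ≠ i := fun h => by simp [← h, b] at hi
  have hij : i ≠ j := fun h => Nat.not_odd_iff_even.2 hi (h ▸ hj)
  have hb : Equiv.swap a i b = b := Equiv.swap_apply_of_ne_of_ne (by simp [a, b, Fin.ext_iff]) hbi
  have hi' : Equiv.swap b j i = i := Equiv.swap_apply_of_ne_of_ne hbi.symm hij
  simpa [Pi.add_comp, Pi.single_comp_swap, hb, hi'] using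
    comp_mem_Psi0 hbj (comp_mem_Psi0 hai hab)

def oddSum (lam : Fin n → ℤ) : ℤ := ∑ i ∈ univ.filter (fun i : Fin n => Odd (i : ℕ)), lam i

def evenSum (lam : Fin n → ℤ) : ℤ := ∑ i ∈ univ.filter (fun i : Fin n => Even (i : ℕ)), lam i

def evenHeavy (n : ℕ) : AddSubmonoid (Fin n → ℤ) where
  carrier := {lam | (∀ i, 0 ≤ lam i) ∧ oddSum lam ≤ evenSum lam}
  zero_mem' := by simp [oddSum, evenSum]
  add_mem' := by
    rintro x y ⟨hx0, hx⟩ ⟨hy0, hy⟩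
    refine ⟨fun i => add_nonneg (hx0 i) (hy0 i), ?_⟩
    simpa only [oddSum, evenSum, Pi.add_apply, sum_add_distrib] using add_le_add hx hy

lemma oddSum_le_evenSum_of_mem_PartSet {lam : Fin n → ℤ} (h : lam ∈ PartSet n) :
    oddSum lam ≤ evenSum lam := by
  refine sum_le_sum_of_injOn (fun k : Fin n => ⟨k - 1, by omega⟩) ?_ ?_
    (fun k _ => h.1 _ _ (Fin.le_def.2 (Nat.sub_le _ _))) (fun k _ => h.2 k)
  · intro x hx y hy hxy
    simp only [coe_filter, mem_univ, true_and, Set.mem_ofPred_eq, Fin.mk.injEq] at hx hy hxy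
    have := hx.pos
    have := hy.pos
    exact Fin.ext (by omega)
  · intro k hk
    simp only [coe_filter, mem_univ, true_and, Set.mem_ofPred_eq] at hk ⊢
    obtain ⟨m, hm⟩ := hk
    exact ⟨m, by simp [hm]; omega⟩

lemma PartSet_subset_evenHeavy : PartSet n ⊆ evenHeavy n :=
  fun _ h => ⟨h.2, oddSum_le_evenSum_of_mem_PartSet h⟩

lemma comp_mem_evenHeavy (π : Equiv.Perm (Fin n)) (hπ : ParityPerm π) (x : Fin n → ℤ)
    (hx : x ∈ evenHeavy n) : x ∘ π ∈ evenHeavy n := by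
  refine ⟨fun i => hx.1 (π i), ?_⟩
  have hodd : oddSum (x ∘ π) = oddSum x :=
    sum_equiv π (by simp [hπ.odd_iff]) fun _ _ => rfl
  have heven : evenSum (x ∘ π) = evenSum x :=
    sum_equiv π (by simp [hπ.even_iff]) fun _ _ => rfl
  exact hodd ▸ heven ▸ hx.2

lemma Psi0_le_evenHeavy : Psi0 n ≤ evenHeavy n :=
  Psi0_le PartSet_subset_evenHeavy comp_mem_evenHeavy

lemma oddSum_sub_single (lam : Fin n → ℤ) (i : Fin n) :
    oddSum (lam - Pi.single i 1) = oddSum lam - if Odd (i : ℕ) then 1 else 0 := by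
  simp [oddSum, sum_sub_distrib]

lemma evenSum_sub_single (lam : Fin n → ℤ) (i : Fin n) :
    evenSum (lam - Pi.single i 1) = evenSum lam - if Even (i : ℕ) then 1 else 0 := by
  simp [evenSum, sum_sub_distrib]

lemma sub_single_nonneg {lam : Fin n → ℤ} (hlam : ∀ k, 0 ≤ lam k) {i : Fin n} (hi : 0 < lam i) :
    ∀ k, 0 ≤ (lam - Pi.single i 1 : Fin n → ℤ) k := by
  intro k
  rcases eq_or_ne k i with rfl | hk
  · simp only [Pi.sub_apply, Pi.single_eq_same]
    omega
  · simpa [hk] using hlam k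

lemma exists_sub_mem_evenHeavy {lam : Fin n → ℤ} (hlam : lam ∈ evenHeavy n) (hne : lam ≠ 0) :
    ∃ g ∈ Psi0 n, 0 < ∑ k, g k ∧ lam - g ∈ evenHeavy n := by
  obtain ⟨hnonneg, hle⟩ := hlam
  by_cases hodd : ∃ j : Fin n, Odd (j : ℕ) ∧ 0 < lam j
  · obtain ⟨j, hj, hlamj⟩ := hodd
    have hoddpos : 0 < oddSum lam :=
      hlamj.trans_le (single_le_sum (fun k _ => hnonneg k) (by simpa using hj))
    obtain ⟨i, hi, hlami⟩ : ∃ i ∈ univ.filter (fun i : Fin n => Even (i : ℕ)), 0 < lam i :=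
      exists_lt_of_sum_lt (by simpa [evenSum] using hoddpos.trans_le hle)
    rw [mem_filter] at hi
    have hij : i ≠ j := fun h => Nat.not_odd_iff_even.2 hi.2 (h ▸ hj)
    refine ⟨_, single_add_single_mem_Psi0 hi.2 hj, by simp [sum_add_distrib], ?_, ?_⟩
    · rw [sub_add_eq_sub_sub]
      exact sub_single_nonneg (sub_single_nonneg hnonneg hlami) (by simpa [hij.symm] using hlamj)
    · simp only [sub_add_eq_sub_sub, oddSum_sub_single, evenSum_sub_single, hi.2, hj,
        Nat.not_odd_iff_even.2 hi.2, Nat.not_even_iff_odd.2 hj, if_true, if_false]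
      linarith
  · simp only [not_exists, not_and, not_lt] at hodd
    obtain ⟨i, hi⟩ := Function.ne_iff.1 hne
    have hieven : Even (i : ℕ) := by
      by_contra h
      exact hi (le_antisymm (hodd i (Nat.not_even_iff_odd.1 h)) (hnonneg i))
    have hlami : 0 < lam i := (hnonneg i).lt_of_ne (Ne.symm hi)
    have hodd0 : oddSum lam = 0 :=
      sum_eq_zero fun k hk => le_antisymm (hodd k (by simpa using hk)) (hnonneg k)
    have heven : lam i ≤ evenSum lam :=
      single_le_sum (fun k _ => hnonneg k) (by simpa using hieven)
    refine ⟨_, single_mem_Psi0 hieven, by simp, sub_single_nonneg hnonneg hlami, ?_⟩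
    simp only [oddSum_sub_single, evenSum_sub_single, hieven, Nat.not_odd_iff_even.2 hieven,
      if_true, if_false]
    linarith

lemma evenHeavy_le_Psi0 : evenHeavy n ≤ Psi0 n := by
  intro lam hlam
  induction hN : (∑ k, lam k).toNat using Nat.strong_induction_on generalizing lam with
  | _ N ih =>
  rcases eq_or_ne lam 0 with rfl | hne
  · exact zero_mem _
  obtain ⟨g, hg, hgpos, hsub⟩ := exists_sub_mem_evenHeavy hlam hne
  have hlt : (∑ k, (lam - g) k).toNat < N := by
    have : 0 ≤ ∑ k, (lam - g) k := sum_nonneg fun k _ => hsub.1 k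
    simp only [Pi.sub_apply, sum_sub_distrib] at this ⊢
    omega
  simpa using add_mem (ih _ hlt hsub rfl) hg

/-- Positions are 0-based: the paper's odd positions `1, 3, …` are the `i` with `Even (i : ℕ)`. -/
theorem Psi0_eq_carrier_general (n : ℕ) :
    (Psi0 n : Set (Fin n → ℤ)) =
      {lam | (∀ i, 0 ≤ lam i) ∧
        ∑ i ∈ Finset.univ.filter (fun i : Fin n => Odd (i : ℕ)), lam i ≤
          ∑ i ∈ Finset.univ.filter (fun i : Fin n => Even (i : ℕ)), lam i} :=
  congrArg SetLike.coe (le_antisymm Psi0_le_evenHeavy evenHeavy_le_Psi0)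

/-- `Ψ_0` consists of all `λ ∈ ℕ^n` with `∑_{i odd} λ_i ≥ ∑_{i even} λ_i` (1-based parity;
1-based odd positions are 0-based even positions). -/
theorem Psi0_eq_carrier (n : ℕ) (hn : 1 ≤ n) :
    (Psi0 n : Set (Fin n → ℤ)) =
      {lam | (∀ i, 0 ≤ lam i) ∧
        ∑ i ∈ Finset.univ.filter (fun i : Fin n => Odd (i : ℕ)), lam i ≤
          ∑ i ∈ Finset.univ.filter (fun i : Fin n => Even (i : ℕ)), lam i} :=
  Psi0_eq_carrier_general n
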